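/- For every integer k ≥ 2 and every j with 1 ≤ j ≤ k−1, one has 0 < ζ(2k−2j)/ζ(2k) − 1 < 3 · 4^(j−k). -/

import Mathlib

noncomputable def zetaR (n : ℕ) : ℝ := ∑' m : ℕ, (1 : ℝ) / (m + 1) ^ n

/-!
Writing `a = 2k - 2j`, the ratio `ζ(a)/ζ(2k)` exceeds `1` because `ζ` is strictly decreasing, and
is at most `ζ(a)` because `ζ(2k) ≥ 1`. For the tail, `(m+2)^{-a} ≤ 2^{2-a} (m+2)^{-2}` gives
`ζ(a) - 1 ≤ 2^{2-a} (ζ(2) - 1) = 2^{2-a} (π²/6 - 1) < 3 · 2^{-a} = 3 · 4^{j-k}`, using `π² < 21/2`.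
-/

open Real

lemma summable_one_div_nat_add_one_pow {n : ℕ} (hn : 1 < n) :
    Summable fun m : ℕ => (1 : ℝ) / ((m : ℝ) + 1) ^ n := by
  simpa using (summable_nat_add_iff 1).mpr (Real.summable_one_div_nat_pow.mpr hn)

lemma summable_one_div_nat_add_two_pow {n : ℕ} (hn : 1 < n) :
    Summable fun m : ℕ => (1 : ℝ) / ((m : ℝ) + 2) ^ n := by
  simpa [add_assoc, one_add_one_eq_two] using
    (summable_nat_add_iff 1).mpr (summable_one_div_nat_add_one_pow hn)

lemma zetaR_sub_one_eq_tsum {n : ℕ} (hn : 1 < n) :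
    zetaR n - 1 = ∑' m : ℕ, (1 : ℝ) / ((m : ℝ) + 2) ^ n := by
  rw [zetaR, (summable_one_div_nat_add_one_pow hn).tsum_eq_zero_add]
  simp [add_assoc, one_add_one_eq_two]

lemma one_le_zetaR {n : ℕ} (hn : 1 < n) : 1 ≤ zetaR n := by
  rw [← sub_nonneg, zetaR_sub_one_eq_tsum hn]
  exact tsum_nonneg fun m => by positivity

lemma zetaR_lt_zetaR {a b : ℕ} (ha : 1 < a) (hab : a < b) : zetaR b < zetaR a := by
  rw [← sub_lt_sub_iff_right 1, zetaR_sub_one_eq_tsum ha, zetaR_sub_one_eq_tsum (ha.trans hab)]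
  refine Summable.tsum_lt_tsum (i := 0) (fun m => ?_) ?_
    (summable_one_div_nat_add_two_pow (ha.trans hab)) (summable_one_div_nat_add_two_pow ha)
  · gcongr
    linarith [(m.cast_nonneg : (0 : ℝ) ≤ m)]
  · norm_num
    gcongr
    norm_num

lemma zetaR_two : zetaR 2 = π ^ 2 / 6 := by
  simpa [zetaR] using ((hasSum_nat_add_iff' 1).mpr hasSum_zeta_two).tsum_eq

lemma one_div_nat_add_two_pow_le {n : ℕ} (hn : 2 ≤ n) (m : ℕ) :
    (1 : ℝ) / ((m : ℝ) + 2) ^ n ≤ 4 / 2 ^ n * (1 / ((m : ℝ) + 2) ^ 2) := by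
  obtain ⟨d, rfl⟩ := Nat.exists_eq_add_of_le hn
  have h2 : (2 : ℝ) ^ d ≤ ((m : ℝ) + 2) ^ d := by gcongr; linarith [(m.cast_nonneg : (0 : ℝ) ≤ m)]
  rw [div_mul_div_comm, div_le_div_iff₀ (by positivity) (by positivity)]
  calc 1 * (2 ^ (2 + d) * ((m : ℝ) + 2) ^ 2) = 4 * ((m : ℝ) + 2) ^ 2 * 2 ^ d := by ring
    _ ≤ 4 * ((m : ℝ) + 2) ^ 2 * ((m : ℝ) + 2) ^ d := by gcongr
    _ = 4 * 1 * ((m : ℝ) + 2) ^ (2 + d) := by ring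

lemma zetaR_sub_one_le {n : ℕ} (hn : 2 ≤ n) : zetaR n - 1 ≤ 4 / 2 ^ n * (zetaR 2 - 1) := by
  rw [zetaR_sub_one_eq_tsum (by omega), zetaR_sub_one_eq_tsum one_lt_two, ← tsum_mul_left]
  exact Summable.tsum_le_tsum (one_div_nat_add_two_pow_le hn) (summable_one_div_nat_add_two_pow
    (by omega)) ((summable_one_div_nat_add_two_pow one_lt_two).mul_left _)

lemma zetaR_sub_one_lt {n : ℕ} (hn : 2 ≤ n) : zetaR n - 1 < 3 / 2 ^ n := by
  have hπ : π ^ 2 < 21 / 2 := by nlinarith [pi_lt_d2, pi_pos]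
  calc zetaR n - 1 ≤ 4 / 2 ^ n * (zetaR 2 - 1) := zetaR_sub_one_le hn
    _ < 4 / 2 ^ n * (3 / 4) := by rw [zetaR_two]; gcongr; linarith
    _ = 3 / 2 ^ n := by ring

theorem stmt_16 (k j : ℕ) (hj1 : 1 ≤ j) (hj2 : j ≤ k - 1) :
    0 < zetaR (2 * k - 2 * j) / zetaR (2 * k) - 1 ∧
      zetaR (2 * k - 2 * j) / zetaR (2 * k) - 1 < 3 * (4 : ℝ) ^ ((j : ℤ) - (k : ℤ)) := by
  set a := 2 * k - 2 * j
  have ha : 2 ≤ a := by omega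
  have hζ : 1 ≤ zetaR (2 * k) := one_le_zetaR (by omega)
  have hpow : (4 : ℝ) ^ ((j : ℤ) - (k : ℤ)) = 1 / 2 ^ a := by
    rw [show (j : ℤ) - k = -((k - j : ℕ) : ℤ) by omega, zpow_neg, zpow_natCast,
      show a = 2 * (k - j) by omega, pow_mul]
    norm_num
  constructor
  · rw [sub_pos, one_lt_div (by linarith)]
    exact zetaR_lt_zetaR (by omega) (by omega)
  · calc zetaR a / zetaR (2 * k) - 1 ≤ zetaR a - 1 := by
          gcongr; exact div_le_self (by linarith [one_le_zetaR (by omega : 1 < a)]) hζ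
      _ < 3 / 2 ^ a := zetaR_sub_one_lt ha
      _ = 3 * (4 : ℝ) ^ ((j : ℤ) - (k : ℤ)) := by rw [hpow]; ring
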